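/- Let B be an associative R-algebra, M a B-bimodule, and A = T_B M the tensor algebra of M over B. Then there is a canonical isomorphism of A-bimodules A ⊗_B M ⊗_B A ≅ Ω¹_B A sending a₁ ⊗ m ⊗ a₂ to a₁ (d m) a₂, where d : A → Ω¹_B A is the universal derivation. -/

import Mathlib

/-!
STATEMENT 4: If `A = T_B M` is the tensor algebra of a `B`-bimodule `M`, then
`A ⊗_B M ⊗_B A ≅ Ω¹_B A`, via `a₁ ⊗ m ⊗ a₂ ↦ a₁ (d m) a₂`.

`A ⊗_B A` is realized as the quotient of `A ⊗_k A` by the balancing relations,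
`Ω¹_B A` as the kernel of the induced multiplication, and `A ⊗_B M ⊗_B A` via
the balancing submodule `Bal3` of `A ⊗_k M ⊗_k A`.  The statement asserts that
the canonical map `Φ` (with `Φ(a ⊗ m ⊗ c) = a (d m) c`) exists, has range
exactly `Ω¹_B A`, and kernel exactly the balancing relations, i.e. it induces
the canonical isomorphism `A ⊗_B M ⊗_B A ≅ Ω¹_B A`.
`A` being the tensor algebra `T_B M` is encoded by its universal property.
-/

open TensorProduct MulOpposite

noncomputable section
namespace Stmt4

variable (k : Type) [Field k] (B : Type) [Ring B] [Algebra k B]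
variable (A : Type) [Ring A] [Algebra k A] (ιB : B →ₐ[k] A)

/-- The balancing submodule defining `A ⊗_B A` as a quotient of `A ⊗_k A`. -/
def Bal : Submodule k (A ⊗[k] A) :=
  Submodule.span k {z | ∃ (x y : A) (r : B), z = (x * ιB r) ⊗ₜ[k] y - x ⊗ₜ[k] (ιB r * y)}

/-- `A ⊗_B A`, realized as a quotient of `A ⊗_k A`. -/
abbrev QR := (A ⊗[k] A) ⧸ Bal k B A ιB

/-- Left (outer) action of `a ∈ A` on `A ⊗_B A`. -/
def lact (a : A) : QR k B A ιB →ₗ[k] QR k B A ιB :=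
  Submodule.mapQ _ _ (LinearMap.mulLeft k ((a : A) ⊗ₜ[k] (1 : A))) (by
    rw [Bal, Submodule.span_le]
    rintro z ⟨x, y, r, rfl⟩
    simp only [SetLike.mem_coe, Submodule.mem_comap, LinearMap.mulLeft_apply, mul_sub,
      Algebra.TensorProduct.tmul_mul_tmul, mul_one, one_mul]
    exact Submodule.subset_span ⟨a * x, y, r, by rw [mul_assoc]⟩)

/-- Right (outer) action of `b ∈ A` on `A ⊗_B A`. -/
def ract (b : A) : QR k B A ιB →ₗ[k] QR k B A ιB :=
  Submodule.mapQ _ _ (LinearMap.mulRight k ((1 : A) ⊗ₜ[k] (b : A))) (by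
    rw [Bal, Submodule.span_le]
    rintro z ⟨x, y, r, rfl⟩
    simp only [SetLike.mem_coe, Submodule.mem_comap, LinearMap.mulRight_apply, sub_mul,
      Algebra.TensorProduct.tmul_mul_tmul, mul_one, one_mul]
    exact Submodule.subset_span ⟨x, y * b, r, by rw [mul_assoc]⟩)

/-- The multiplication map `A ⊗_B A → A`. -/
def mulBar : QR k B A ιB →ₗ[k] A :=
  Submodule.liftQ _ (LinearMap.mul' k A) (by
    rw [Bal, Submodule.span_le]
    rintro z ⟨x, y, r, rfl⟩
    simp [LinearMap.mul'_apply, mul_assoc])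

/-- `Ω¹_B A`, the kernel of the multiplication map `A ⊗_B A → A`. -/
def Omega : Submodule k (QR k B A ιB) := LinearMap.ker (mulBar k B A ιB)

/-- The universal derivation `d : A → A ⊗_B A`, `a ↦ 1 ⊗ a − a ⊗ 1`. -/
def d : A →ₗ[k] QR k B A ιB :=
  (Bal k B A ιB).mkQ ∘ₗ (TensorProduct.mk k A A 1 - (TensorProduct.mk k A A).flip 1)

/-!
Since `x ⊗ y - x y ⊗ 1 = x (d y)`, `Ω¹_B A` is spanned by the elements `x (d y)`. The universal
property forces `A` to be generated by `B` and `M`; as `d` is a derivation vanishing on `B`, every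
`x (d y) c` is then a sum of elements `x' (d m) c'` with `m ∈ M`, which make up the range of `Φ`.
The same Leibniz rule shows that `Φ` kills the balancing relations.

For the converse, let `N = A ⊗_B M ⊗_B A`, a left `A`-module. The universal property, applied to
`End_k(N × A)` with `x ↦ [[x, D x · _], [0, x]]`, yields a derivation `D : A → N` with
`D m = 1 ⊗ m ⊗ 1`, and `x ⊗ y ↦ x D(y)` is a left inverse of `Φ` modulo the balancing relations.
-/

section Calculus

variable {k B A ιB}

lemma lact_mkQ (x : A) (t : A ⊗[k] A) :
    lact k B A ιB x ((Bal k B A ιB).mkQ t) = (Bal k B A ιB).mkQ ((x ⊗ₜ[k] 1) * t) := rfl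

lemma ract_mkQ (x : A) (t : A ⊗[k] A) :
    ract k B A ιB x ((Bal k B A ιB).mkQ t) = (Bal k B A ιB).mkQ (t * (1 ⊗ₜ[k] x)) := rfl

lemma mulBar_mkQ (t : A ⊗[k] A) : mulBar k B A ιB ((Bal k B A ιB).mkQ t) = LinearMap.mul' k A t :=
  rfl

lemma d_apply (x : A) : d k B A ιB x = (Bal k B A ιB).mkQ (1 ⊗ₜ[k] x - x ⊗ₜ[k] 1) := rfl

lemma lact_lact (x y : A) (w : QR k B A ιB) :
    lact k B A ιB x (lact k B A ιB y w) = lact k B A ιB (x * y) w := by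
  obtain ⟨t, rfl⟩ := (Bal k B A ιB).mkQ_surjective w
  simp only [lact_mkQ, ← mul_assoc, Algebra.TensorProduct.tmul_mul_tmul, mul_one]

lemma ract_ract (x y : A) (w : QR k B A ιB) :
    ract k B A ιB x (ract k B A ιB y w) = ract k B A ιB (y * x) w := by
  obtain ⟨t, rfl⟩ := (Bal k B A ιB).mkQ_surjective w
  simp only [ract_mkQ, mul_assoc, Algebra.TensorProduct.tmul_mul_tmul, mul_one]

lemma lact_ract_comm (x y : A) (w : QR k B A ιB) :
    lact k B A ιB x (ract k B A ιB y w) = ract k B A ιB y (lact k B A ιB x w) := by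
  obtain ⟨t, rfl⟩ := (Bal k B A ιB).mkQ_surjective w
  simp only [lact_mkQ, ract_mkQ, mul_assoc]

lemma ract_one (w : QR k B A ιB) : ract k B A ιB 1 w = w := by
  obtain ⟨t, rfl⟩ := (Bal k B A ιB).mkQ_surjective w
  rw [ract_mkQ, ← Algebra.TensorProduct.one_def, mul_one]

lemma d_mul (x y : A) :
    d k B A ιB (x * y) = lact k B A ιB x (d k B A ιB y) + ract k B A ιB y (d k B A ιB x) := by
  simp only [d_apply, lact_mkQ, ract_mkQ, ← map_add, mul_sub, sub_mul,
    Algebra.TensorProduct.tmul_mul_tmul, one_mul, mul_one, sub_add_sub_cancel']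

lemma d_ιB (b : B) : d k B A ιB (ιB b) = 0 := by
  rw [d_apply, Submodule.mkQ_apply, Submodule.Quotient.mk_eq_zero, ← neg_sub]
  refine neg_mem (Submodule.subset_span ⟨1, 1, b, ?_⟩)
  rw [one_mul, mul_one]

lemma Omega_le_span_lact_d : Omega k B A ιB ≤
    Submodule.span k (Set.range fun p : A × A => lact k B A ιB p.1 (d k B A ιB p.2)) := by
  have key (t : A ⊗[k] A) :
      (Bal k B A ιB).mkQ t - (Bal k B A ιB).mkQ (LinearMap.mul' k A t ⊗ₜ[k] 1) ∈
        Submodule.span k (Set.range fun p : A × A => lact k B A ιB p.1 (d k B A ιB p.2)) := by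
    induction t using TensorProduct.induction_on with
    | zero => simp
    | tmul x y =>
      refine Submodule.subset_span ⟨(x, y), ?_⟩
      simp only [lact_mkQ, d_apply, Algebra.TensorProduct.tmul_mul_tmul, one_mul, mul_one,
        map_sub, LinearMap.mul'_apply]
    | add u v hu hv =>
      convert add_mem hu hv using 1
      simp only [map_add, TensorProduct.add_tmul]
      abel
  intro w hw
  obtain ⟨t, rfl⟩ := (Bal k B A ιB).mkQ_surjective w
  have hmul : LinearMap.mul' k A t = 0 := hw
  simpa [hmul] using key t

end Calculus

section OffDiag

variable {k A}
variable {N : Type} [AddCommGroup N] [Module k N]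

def offDiag : (A →ₗ[k] N) →ₗ[k] Module.End k (N × A) :=
  LinearMap.llcomp k (N × A) N (N × A) (LinearMap.inl k N A) ∘ₗ
    LinearMap.lcomp k N (LinearMap.snd k N A)

def offDiagPart : Module.End k (N × A) →ₗ[k] A →ₗ[k] N :=
  LinearMap.lcomp k N (LinearMap.inr k N A) ∘ₗ
    LinearMap.llcomp k (N × A) (N × A) N (LinearMap.fst k N A)

@[simp] lemma offDiag_apply (δ : A →ₗ[k] N) (v : N × A) : offDiag δ v = (δ v.2, 0) := rfl

@[simp] lemma offDiagPart_apply (f : Module.End k (N × A)) (a : A) :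
    offDiagPart f a = (f (0, a)).1 := rfl

@[simp] lemma offDiagPart_offDiag (δ : A →ₗ[k] N) : offDiagPart (offDiag δ) = δ := rfl

@[simp] lemma offDiag_mul_offDiag (δ δ' : A →ₗ[k] N) : offDiag δ * offDiag δ' = 0 := by
  ext v <;> simp

variable [Module A N] [IsScalarTower k A N]

variable (k N) in
def diagEnd : A →ₐ[k] Module.End k (N × A) := Algebra.lsmul k k (N × A)

@[simp] lemma diagEnd_apply (x : A) (v : N × A) : diagEnd k N x v = x • v := rfl

@[simp] lemma offDiagPart_diagEnd (x : A) : offDiagPart (diagEnd k N x) = 0 := by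
  ext a; simp

@[simp] lemma diagEnd_mul_offDiag (x : A) (δ : A →ₗ[k] N) :
    diagEnd k N x * offDiag δ = offDiag (x • δ) := by
  ext v <;> simp

@[simp] lemma offDiag_mul_diagEnd (δ : A →ₗ[k] N) (y : A) :
    offDiag δ * diagEnd k N y = offDiag (δ ∘ₗ LinearMap.mulLeft k y) := by
  ext v <;> simp

end OffDiag

section TensorAlgebra

variable {k B A}
variable {M : Type} [AddCommGroup M] [Module k M] [SMul B M] [SMul Bᵐᵒᵖ M]

def IsTensorAlgebra (ιB : B →ₐ[k] A) (ιM : M →ₗ[k] A) : Prop :=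
  ∀ (C : Type) [Ring C] [Algebra k C] (fB : B →ₐ[k] C) (fM : M →ₗ[k] C),
    (∀ (b : B) (m : M), fM (b • m) = fB b * fM m) →
    (∀ (b : B) (m : M), fM (op b • m) = fM m * fB b) →
    ∃! F : A →ₐ[k] C, (∀ b : B, F (ιB b) = fB b) ∧ (∀ m : M, F (ιM m) = fM m)

variable {ιB : B →ₐ[k] A} {ιM : M →ₗ[k] A}
  (hL : ∀ (b : B) (m : M), ιM (b • m) = ιB b * ιM m)
  (hR : ∀ (b : B) (m : M), ιM (op b • m) = ιM m * ιB b)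
include hL hR

theorem IsTensorAlgebra.adjoin_eq_top (h : IsTensorAlgebra ιB ιM) :
    Algebra.adjoin k (Set.range ιB ∪ Set.range ιM) = ⊤ := by
  set S := Algebra.adjoin k (Set.range ιB ∪ Set.range ιM)
  have hB (b : B) : ιB b ∈ S := Algebra.subset_adjoin (Or.inl ⟨b, rfl⟩)
  have hM (m : M) : ιM m ∈ S := Algebra.subset_adjoin (Or.inr ⟨m, rfl⟩)
  obtain ⟨G, ⟨hGB, hGM⟩, -⟩ := h S (ιB.codRestrict S hB)
    (ιM.codRestrict (Subalgebra.toSubmodule S) hM)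
    (fun b m => Subtype.ext (hL b m)) (fun b m => Subtype.ext (hR b m))
  -- both `id` and `S.val ∘ G` extend `ιB` and `ιM`
  obtain ⟨_, -, huniq⟩ := h A ιB ιM hL hR
  have hG : S.val.comp G = AlgHom.id k A :=
    (huniq _ ⟨fun b => congrArg Subtype.val (hGB b), fun m => congrArg Subtype.val (hGM m)⟩).trans
      (huniq _ ⟨fun _ => rfl, fun _ => rfl⟩).symm
  refine eq_top_iff.2 fun x _ => ?_
  rw [← AlgHom.id_apply (R := k) x, ← hG]
  exact (G x).2

@[elab_as_elim]
theorem IsTensorAlgebra.induction (h : IsTensorAlgebra ιB ιM) {P : A → Prop}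
    (ιB_mem : ∀ b, P (ιB b)) (ιM_mem : ∀ m, P (ιM m))
    (add : ∀ x y, P x → P y → P (x + y)) (mul : ∀ x y, P x → P y → P (x * y)) (x : A) :
    P x := by
  have hx : x ∈ Algebra.adjoin k (Set.range ιB ∪ Set.range ιM) := by
    rw [h.adjoin_eq_top hL hR]; trivial
  induction hx using Algebra.adjoin_induction with
  | mem x hx => rcases hx with ⟨b, rfl⟩ | ⟨m, rfl⟩ <;> simp only [ιB_mem, ιM_mem]
  | algebraMap r => simpa using ιB_mem (algebraMap k B r)
  | add x y _ _ hx hy => exact add x y hx hy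
  | mul x y _ _ hx hy => exact mul x y hx hy

theorem IsTensorAlgebra.exists_derivation (h : IsTensorAlgebra ιB ιM)
    {N : Type} [AddCommGroup N] [Module k N] [Module A N] [IsScalarTower k A N]
    (δM : M →ₗ[k] A →ₗ[k] N) (hδL : ∀ b m, δM (b • m) = ιB b • δM m)
    (hδR : ∀ b m, δM (op b • m) = δM m ∘ₗ LinearMap.mulLeft k (ιB b)) :
    ∃ δ : A →ₗ[k] A →ₗ[k] N, (∀ b, δ (ιB b) = 0) ∧ (∀ m, δ (ιM m) = δM m) ∧
      ∀ x y, δ (x * y) = x • δ y + δ x ∘ₗ LinearMap.mulLeft k y := by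
  -- `F x` is the upper triangular operator `[[x, δ x], [0, x]]` on `N × A`
  obtain ⟨F, ⟨hFB, hFM⟩, -⟩ := h (Module.End k (N × A)) ((diagEnd k N).comp ιB)
    ((diagEnd k N).toLinearMap ∘ₗ ιM + offDiag ∘ₗ δM)
    (fun b m => by simp [hL, hδL, mul_add])
    (fun b m => by simp [hR, hδR, add_mul])
  have hF (x : A) : F x = diagEnd k N x + offDiag (offDiagPart (F x)) := by
    suffices ∃ δ, F x = diagEnd k N x + offDiag δ by
      obtain ⟨δ, hδ⟩ := this
      simp [hδ]
    induction x using h.induction hL hR with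
    | ιB_mem b => exact ⟨0, by simp [hFB]⟩
    | ιM_mem m => exact ⟨δM m, by simp [hFM]⟩
    | add x y hx hy =>
      obtain ⟨δ, hδ⟩ := hx
      obtain ⟨δ', hδ'⟩ := hy
      exact ⟨δ + δ', by simp [hδ, hδ', add_add_add_comm]⟩
    | mul x y hx hy =>
      obtain ⟨δ, hδ⟩ := hx
      obtain ⟨δ', hδ'⟩ := hy
      exact ⟨x • δ' + δ ∘ₗ LinearMap.mulLeft k y, by simp [hδ, hδ', add_mul, mul_add]; abel⟩
  refine ⟨offDiagPart ∘ₗ F.toLinearMap, fun b => by simp [hFB], fun m => by simp [hFM],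
    fun x y => ?_⟩
  have hxy := congrArg offDiagPart (map_mul F x y)
  rw [hF x, hF y, add_mul, mul_add, mul_add, ← map_mul (diagEnd k N)] at hxy
  simpa [add_comm, -map_mul] using hxy

end TensorAlgebra

section Phi

variable {k B A} {ιB : B →ₐ[k] A}
variable {M : Type} [AddCommGroup M] [Module k M] {ιM : M →ₗ[k] A}

variable (ιM) in
def phiTensor : A ⊗[k] (M ⊗[k] A) →ₗ[k] A ⊗[k] A :=
  LinearMap.lTensor A (LinearMap.mul' k A ∘ₗ LinearMap.rTensor A ιM) -
    LinearMap.rTensor A (LinearMap.mul' k A) ∘ₗ (TensorProduct.assoc k A A A).symm.toLinearMap ∘ₗ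
      LinearMap.lTensor A (LinearMap.rTensor A ιM)

@[simp] lemma phiTensor_tmul (a c : A) (m : M) :
    phiTensor ιM (a ⊗ₜ[k] (m ⊗ₜ[k] c)) = a ⊗ₜ[k] (ιM m * c) - (a * ιM m) ⊗ₜ[k] c := by
  simp [phiTensor]

variable (ιB ιM) in
def phi : A ⊗[k] (M ⊗[k] A) →ₗ[k] QR k B A ιB :=
  (Bal k B A ιB).mkQ ∘ₗ phiTensor ιM

lemma phi_tmul (a c : A) (m : M) :
    phi ιB ιM (a ⊗ₜ[k] (m ⊗ₜ[k] c)) = lact k B A ιB a (ract k B A ιB c (d k B A ιB (ιM m))) := by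
  simp only [phi, LinearMap.comp_apply, phiTensor_tmul, d_apply, ract_mkQ, lact_mkQ, map_sub,
    Algebra.TensorProduct.tmul_mul_tmul, one_mul, mul_one]

lemma range_phi_le_Omega : LinearMap.range (phi ιB ιM) ≤ Omega k B A ιB := by
  suffices mulBar k B A ιB ∘ₗ phi ιB ιM = 0 by
    rintro _ ⟨t, rfl⟩
    exact LinearMap.congr_fun this t
  refine TensorProduct.ext_threefold' fun a m c => ?_
  simp only [phi, LinearMap.comp_apply, phiTensor_tmul, mulBar_mkQ, map_sub, LinearMap.mul'_apply,
    mul_assoc, sub_self, LinearMap.zero_apply]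

variable [SMul B M] [SMul Bᵐᵒᵖ M]

variable (ιB M) in
def Bal3 : Submodule k (A ⊗[k] (M ⊗[k] A)) :=
  Submodule.span k
    ({z | ∃ (a c : A) (m : M) (b : B),
        z = (a * ιB b) ⊗ₜ[k] (m ⊗ₜ[k] c) - a ⊗ₜ[k] ((b • m) ⊗ₜ[k] c)} ∪
     {z | ∃ (a c : A) (m : M) (b : B),
        z = a ⊗ₜ[k] ((op b • m) ⊗ₜ[k] c) - a ⊗ₜ[k] (m ⊗ₜ[k] (ιB b * c))})

lemma smul_mem_Bal3 (x : A) {t : A ⊗[k] (M ⊗[k] A)} (ht : t ∈ Bal3 ιB M) : x • t ∈ Bal3 ιB M := by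
  induction ht using Submodule.span_induction with
  | mem t ht =>
    refine Submodule.subset_span ?_
    rcases ht with ⟨a, c, m, b, rfl⟩ | ⟨a, c, m, b, rfl⟩
    · exact Or.inl ⟨x * a, c, m, b, by simp [smul_sub, TensorProduct.smul_tmul', mul_assoc]⟩
    · exact Or.inr ⟨x * a, c, m, b, by simp [smul_sub, TensorProduct.smul_tmul']⟩
  | zero => simp
  | add t u _ _ ht hu => simpa [smul_add] using add_mem ht hu
  | smul r t _ ht => simpa [smul_comm x r] using Submodule.smul_mem _ r ht

variable (ιB M) in
def leftBal3 : Submodule A (A ⊗[k] (M ⊗[k] A)) where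
  toAddSubmonoid := (Bal3 ιB M).toAddSubmonoid
  smul_mem' x _ ht := smul_mem_Bal3 x ht

variable (hL : ∀ (b : B) (m : M), ιM (b • m) = ιB b * ιM m)
  (hR : ∀ (b : B) (m : M), ιM (op b • m) = ιM m * ιB b)
include hL hR

lemma Bal3_le_ker_phi : Bal3 ιB M ≤ LinearMap.ker (phi ιB ιM) := by
  rw [Bal3, Submodule.span_le]
  rintro _ (⟨a, c, m, b, rfl⟩ | ⟨a, c, m, b, rfl⟩) <;>
    simp only [SetLike.mem_coe, LinearMap.mem_ker, map_sub, sub_eq_zero, phi_tmul]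
  · rw [hL, d_mul, d_ιB, map_zero, add_zero, ← lact_ract_comm, lact_lact]
  · rw [hR, d_mul, d_ιB, map_zero, zero_add, ract_ract]

variable (h : IsTensorAlgebra ιB ιM)
include h

lemma lact_ract_d_mem_range_phi (x c y : A) :
    lact k B A ιB x (ract k B A ιB c (d k B A ιB y)) ∈ LinearMap.range (phi ιB ιM) := by
  induction y using h.induction hL hR generalizing x c with
  | ιB_mem b => simp [d_ιB]
  | ιM_mem m => exact ⟨x ⊗ₜ[k] (m ⊗ₜ[k] c), phi_tmul x c m⟩
  | add y z hy hz => simpa using add_mem (hy x c) (hz x c)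
  | mul y z hy hz =>
    rw [d_mul, map_add, map_add, ← lact_ract_comm, lact_lact, ract_ract]
    exact add_mem (hz (x * y) c) (hy x (z * c))

theorem range_phi : LinearMap.range (phi ιB ιM) = Omega k B A ιB := by
  refine le_antisymm range_phi_le_Omega (Omega_le_span_lact_d.trans ?_)
  rw [Submodule.span_le]
  rintro _ ⟨⟨x, y⟩, rfl⟩
  simpa [ract_one] using lact_ract_d_mem_range_phi hL hR h x 1 y

lemma exists_comp_phi_eq_mkQ :
    ∃ Ψ : QR k B A ιB →ₗ[k] (A ⊗[k] (M ⊗[k] A)) ⧸ leftBal3 ιB M,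
      Ψ ∘ₗ phi ιB ιM = (leftBal3 ιB M).mkQ.restrictScalars k := by
  set π := (leftBal3 ιB M).mkQ.restrictScalars k
  have hπ {t u : A ⊗[k] (M ⊗[k] A)} (htu : t - u ∈ Bal3 ιB M) : π t = π u :=
    (Submodule.Quotient.eq _).2 htu
  have hπ_smul (x : A) (t : A ⊗[k] (M ⊗[k] A)) : x • π t = π (x • t) :=
    (map_smul (leftBal3 ιB M).mkQ x t).symm
  -- `δ x a` stands for `D(x) a`, where `D` is the derivation with `D m = 1 ⊗ m ⊗ 1`
  obtain ⟨δ, hδB, hδM, hδmul⟩ := h.exists_derivation hL hR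
    ((TensorProduct.mk k M A).compr₂ (π ∘ₗ TensorProduct.mk k A (M ⊗[k] A) 1))
    (fun b m => LinearMap.ext fun a => by
      change π (1 ⊗ₜ ((b • m) ⊗ₜ a)) = ιB b • π (1 ⊗ₜ (m ⊗ₜ a))
      rw [hπ_smul, TensorProduct.smul_tmul', smul_eq_mul]
      refine hπ ?_
      rw [← neg_sub]
      exact neg_mem (Submodule.subset_span (Or.inl ⟨1, a, m, b, by rw [one_mul, mul_one]⟩)))
    (fun b m => LinearMap.ext fun a => hπ (Submodule.subset_span (Or.inr ⟨1, a, m, b, rfl⟩)))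
  set Ψ₀ : A ⊗[k] A →ₗ[k] _ :=
    TensorProduct.lift ((Algebra.lsmul k k _).toLinearMap.compl₂ (δ.flip 1))
  have hΨ₀ (x y : A) : Ψ₀ (x ⊗ₜ[k] y) = x • δ y 1 := rfl
  have hBal : Bal k B A ιB ≤ LinearMap.ker Ψ₀ := by
    rw [Bal, Submodule.span_le]
    rintro _ ⟨x, y, b, rfl⟩
    simp [hΨ₀, hδmul, hδB, mul_smul]
  refine ⟨(Bal k B A ιB).liftQ Ψ₀ hBal, TensorProduct.ext_threefold' fun a m c => ?_⟩
  change Ψ₀ (phiTensor ιM (a ⊗ₜ (m ⊗ₜ c))) = π (a ⊗ₜ (m ⊗ₜ c))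
  rw [phiTensor_tmul, map_sub, hΨ₀, hΨ₀, hδmul, hδM, LinearMap.add_apply, smul_add,
    LinearMap.smul_apply, ← mul_smul, add_sub_cancel_left, LinearMap.comp_apply,
    LinearMap.mulLeft_apply, mul_one]
  change a • π (1 ⊗ₜ (m ⊗ₜ c)) = _
  rw [hπ_smul, TensorProduct.smul_tmul', smul_eq_mul, mul_one]

theorem ker_phi_le_Bal3 : LinearMap.ker (phi ιB ιM) ≤ Bal3 ιB M := by
  obtain ⟨Ψ, hΨ⟩ := exists_comp_phi_eq_mkQ hL hR h
  intro t ht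
  have hπ := LinearMap.congr_fun hΨ t
  rw [LinearMap.comp_apply, LinearMap.mem_ker.1 ht, map_zero] at hπ
  exact (Submodule.Quotient.mk_eq_zero _).1 hπ.symm

end Phi

theorem statement4
    (M : Type) [AddCommGroup M] [Module k M] [Module B M] [Module Bᵐᵒᵖ M]
    (ιM : M →ₗ[k] A)
    (hL : ∀ (b : B) (m : M), ιM (b • m) = ιB b * ιM m)
    (hR : ∀ (b : B) (m : M), ιM (op b • m) = ιM m * ιB b)
    -- `A` is the tensor algebra `T_B M`: universal property.
    (hUP : ∀ (C : Type) [Ring C] [Algebra k C] (fB : B →ₐ[k] C) (fM : M →ₗ[k] C),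
      (∀ (b : B) (m : M), fM (b • m) = fB b * fM m) →
      (∀ (b : B) (m : M), fM (op b • m) = fM m * fB b) →
      ∃! F : A →ₐ[k] C, (∀ b : B, F (ιB b) = fB b) ∧ (∀ m : M, F (ιM m) = fM m)) :
    -- Conclusion: the canonical map `A ⊗ M ⊗ A → A ⊗_B A`,
    -- `a ⊗ m ⊗ c ↦ a (d m) c`, has range `Ω¹_B A` and kernel the balancing
    -- submodule, i.e. it induces an isomorphism `A ⊗_B M ⊗_B A ≅ Ω¹_B A`.
    ∃ Φ : A ⊗[k] (M ⊗[k] A) →ₗ[k] QR k B A ιB,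
      (∀ (a c : A) (m : M),
        Φ (a ⊗ₜ[k] (m ⊗ₜ[k] c)) = lact k B A ιB a (ract k B A ιB c (d k B A ιB (ιM m)))) ∧
      LinearMap.range Φ = Omega k B A ιB ∧
      LinearMap.ker Φ = Submodule.span k
        ({z | ∃ (a c : A) (m : M) (b : B),
            z = (a * ιB b) ⊗ₜ[k] (m ⊗ₜ[k] c) - a ⊗ₜ[k] ((b • m) ⊗ₜ[k] c)} ∪
         {z | ∃ (a c : A) (m : M) (b : B),
            z = a ⊗ₜ[k] ((op b • m) ⊗ₜ[k] c) - a ⊗ₜ[k] (m ⊗ₜ[k] (ιB b * c))}) :=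
  ⟨phi ιB ιM, phi_tmul, range_phi hL hR hUP,
    le_antisymm (ker_phi_le_Bal3 hL hR hUP) (Bal3_le_ker_phi hL hR)⟩

end Stmt4
end
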